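/- Let G be a group acting on a set X, let s₁, s₂ ∈ G with s₀ := s₁ * s₂, and let v, v' ∈ X both have trivial stabilizers in G. Then the map β sending g • v ↦ g • v' (g ∈ G) is a well-defined bijection from the orbit G • v onto the orbit G • v'; moreover, for every g ∈ G and every i ∈ {0, 1, 2}, the elementwise image under β of the edge g • eᵢ(v) equals g • eᵢ(v'), and the image of the face g • F₂^i(v) under the induced map on sets of edges equals g • F₂^i(v'), where eᵢ(·) and F₂^i(·) denote the base edges and base faces built from s₁, s₂ at the given initial point. In particular, the snubs built from the same group data at any two initial points satisfying the initial placement condition are isomorphic as incidence structures. -/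
import Mathlib


open Pointwise

/-- The base edges of the snub at an initial point `w`:
`e₀ = {w, (s₁s₂)•w}`, `e₁ = {w, s₁•w}`, `e₂ = {w, s₂•w}`. -/
def snubBaseEdge {G X : Type*} [Group G] [MulAction G X] (s₁ s₂ : G) (w : X) :
    Fin 3 → Set X :=
  ![{w, (s₁ * s₂) • w}, {w, s₁ • w}, {w, s₂ • w}]

/-- The base faces of the snub at an initial point `w`: `F₂⁰ = {e₀, e₁, s₁ • e₂}`,
`F₂¹ = {s₁ᵏ • e₁ : k ∈ ℤ}`, `F₂² = {s₂ᵏ • e₂ : k ∈ ℤ}`. -/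
def snubBaseFace {G X : Type*} [Group G] [MulAction G X] (s₁ s₂ : G) (w : X) :
    Fin 3 → Set (Set X) :=
  ![{snubBaseEdge s₁ s₂ w 0, snubBaseEdge s₁ s₂ w 1, s₁ • snubBaseEdge s₁ s₂ w 2},
    {E | ∃ k : ℤ, E = s₁ ^ k • snubBaseEdge s₁ s₂ w 1},
    {E | ∃ k : ℤ, E = s₂ ^ k • snubBaseEdge s₁ s₂ w 2}]

lemma snubBaseEdge_eq {G X : Type*} [Group G] [MulAction G X] (s₁ s₂ : G) (w : X) (i : Fin 3) :
    snubBaseEdge s₁ s₂ w i = {w, (![s₁ * s₂, s₁, s₂] i) • w} := by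
  fin_cases i <;> rfl

/-- If `v` and `v'` both have trivial stabilizer in `G`, then the map `g • v ↦ g • v'` is a
well-defined bijection of the orbit of `v` onto the orbit of `v'` carrying each translated
base edge `g • eᵢ(v)` to `g • eᵢ(v')` and each translated base face `g • F₂ⁱ(v)` to
`g • F₂ⁱ(v')`: the snubs at any two initial points satisfying the initial placement
condition are isomorphic. -/
theorem snub_independent_of_initial_point {G X : Type*} [Group G] [MulAction G X]
    (s₁ s₂ : G) (v v' : X)
    (hv : ∀ g : G, g • v = v → g = 1) (hv' : ∀ g : G, g • v' = v' → g = 1) :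
    ∃ β : X → X,
      (∀ g : G, β (g • v) = g • v') ∧
      Set.BijOn β (MulAction.orbit G v) (MulAction.orbit G v') ∧
      (∀ (g : G) (i : Fin 3), β '' (g • snubBaseEdge s₁ s₂ v i) = g • snubBaseEdge s₁ s₂ v' i) ∧
      (∀ (g : G) (i : Fin 3),
        (Set.image β) '' (g • snubBaseFace s₁ s₂ v i) = g • snubBaseFace s₁ s₂ v' i) := by
  classical
  set β : X → X := fun x =>
    if h : x ∈ MulAction.orbit G v then (MulAction.mem_orbit_iff.mp h).choose • v' else x with hβdef
  have hβ : ∀ g : G, β (g • v) = g • v' := by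
    intro g
    have h : g • v ∈ MulAction.orbit G v := MulAction.mem_orbit _ g
    have hspec : (MulAction.mem_orbit_iff.mp h).choose • v = g • v :=
      (MulAction.mem_orbit_iff.mp h).choose_spec
    have : g⁻¹ * (MulAction.mem_orbit_iff.mp h).choose = 1 := by
      apply hv
      rw [mul_smul, hspec, inv_smul_smul]
    have hg : (MulAction.mem_orbit_iff.mp h).choose = g := by
      have := congrArg (g * ·) this
      simpa [mul_assoc] using this
    simp [hβdef, h, hg]
  have hedge : ∀ (g : G) (i : Fin 3),
      β '' (g • snubBaseEdge s₁ s₂ v i) = g • snubBaseEdge s₁ s₂ v' i := by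
    intro g i
    rw [snubBaseEdge_eq, snubBaseEdge_eq]
    set t := ![s₁ * s₂, s₁, s₂] i with ht
    calc β '' (g • ({v, t • v} : Set X)) = β '' {g • v, (g * t) • v} := by
          rw [Set.smul_set_insert, Set.smul_set_singleton, smul_smul]
      _ = {β (g • v), β ((g * t) • v)} := by
          rw [Set.image_insert_eq, Set.image_singleton]
      _ = {g • v', (g * t) • v'} := by rw [hβ, hβ]
      _ = g • ({v', t • v'} : Set X) := by
          rw [Set.smul_set_insert, Set.smul_set_singleton, smul_smul]
  refine ⟨β, hβ, ⟨?_, ?_, ?_⟩, hedge, ?_⟩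
  · rintro x ⟨g, rfl⟩
    show β (g • v) ∈ MulAction.orbit G v'
    rw [hβ g]
    exact MulAction.mem_orbit _ g
  · rintro x ⟨g, rfl⟩ y ⟨g', rfl⟩ hxy
    simp only at hxy
    rw [hβ, hβ] at hxy
    have : g'⁻¹ * g = 1 := by
      apply hv'
      rw [mul_smul, hxy, inv_smul_smul]
    have hg : g = g' := by
      have := congrArg (g' * ·) this
      simpa [mul_assoc] using this
    rw [hg]
  · rintro x ⟨g, rfl⟩
    exact ⟨g • v, MulAction.mem_orbit _ g, hβ g⟩
  · intro g i
    fin_cases i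
    · -- face 0
      show (Set.image β) '' (g • snubBaseFace s₁ s₂ v 0) = g • snubBaseFace s₁ s₂ v' 0
      have expand : ∀ w : X, snubBaseFace s₁ s₂ w 0 =
          ({snubBaseEdge s₁ s₂ w 0, snubBaseEdge s₁ s₂ w 1, s₁ • snubBaseEdge s₁ s₂ w 2} :
            Set (Set X)) := fun _ => rfl
      rw [expand, expand]
      rw [Set.smul_set_insert, Set.smul_set_insert, Set.smul_set_singleton,
        Set.image_insert_eq, Set.image_insert_eq, Set.image_singleton,
        Set.smul_set_insert, Set.smul_set_insert, Set.smul_set_singleton]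
      rw [hedge g 0, hedge g 1, smul_smul, hedge (g * s₁) 2, ← smul_smul]
    · -- face 1
      show (Set.image β) '' (g • snubBaseFace s₁ s₂ v 1) = g • snubBaseFace s₁ s₂ v' 1
      ext E
      constructor
      · rintro ⟨A, hA, rfl⟩
        obtain ⟨B, ⟨k, rfl⟩, rfl⟩ := hA
        refine ⟨s₁ ^ k • snubBaseEdge s₁ s₂ v' 1, ⟨k, rfl⟩, ?_⟩
        show g • (s₁ ^ k • snubBaseEdge s₁ s₂ v' 1) = β '' (g • (s₁ ^ k • snubBaseEdge s₁ s₂ v 1))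
        rw [smul_smul, ← hedge (g * s₁ ^ k) 1, smul_smul]
      · rintro ⟨B, ⟨k, rfl⟩, rfl⟩
        refine ⟨g • (s₁ ^ k • snubBaseEdge s₁ s₂ v 1),
          ⟨s₁ ^ k • snubBaseEdge s₁ s₂ v 1, ⟨k, rfl⟩, rfl⟩, ?_⟩
        rw [smul_smul, hedge (g * s₁ ^ k) 1, ← smul_smul]
    · -- face 2
      show (Set.image β) '' (g • snubBaseFace s₁ s₂ v 2) = g • snubBaseFace s₁ s₂ v' 2
      ext E
      constructor
      · rintro ⟨A, hA, rfl⟩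
        obtain ⟨B, ⟨k, rfl⟩, rfl⟩ := hA
        refine ⟨s₂ ^ k • snubBaseEdge s₁ s₂ v' 2, ⟨k, rfl⟩, ?_⟩
        show g • (s₂ ^ k • snubBaseEdge s₁ s₂ v' 2) = β '' (g • (s₂ ^ k • snubBaseEdge s₁ s₂ v 2))
        rw [smul_smul, ← hedge (g * s₂ ^ k) 2, smul_smul]
      · rintro ⟨B, ⟨k, rfl⟩, rfl⟩
        refine ⟨g • (s₂ ^ k • snubBaseEdge s₁ s₂ v 2),
          ⟨s₂ ^ k • snubBaseEdge s₁ s₂ v 2, ⟨k, rfl⟩, rfl⟩, ?_⟩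
        rw [smul_smul, hedge (g * s₂ ^ k) 2, ← smul_smul]
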